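/- arXiv:1512.01899 — 2 statements merged into one kernel-verified Lean document; each statement's English description precedes it below -/
import Mathlib

section
/- Let 0 < γ < 1/2 and ε > 2γ/(1-2γ), and let ρ : ℝ≥0 → ℝ≥0 be bounded with ρ_u = o(u^{-ε}) as u → ∞. Then there exists δ ∈ (0,1) such that T^{2γ-2} ∫₀^T ∫₀^T ρ_{|t-s|} ds dt → 0 as T → ∞. -/
open Filter intervalIntegral

/-- If `f` is nonneg and dominated by an interval-integrable `g` on `[0,T]`, then
`∫ x in 0..T, f ≤ ∫ x in 0..T, g`, even without assuming `f` is integrable. -/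
lemma aux_integral_le_of_le (f g : ℝ → ℝ) (T : ℝ) (hT : 0 ≤ T)
    (hg : IntervalIntegrable g MeasureTheory.volume 0 T)
    (h0 : ∀ x ∈ Set.Icc (0:ℝ) T, 0 ≤ f x)
    (hfg : ∀ x ∈ Set.Icc (0:ℝ) T, f x ≤ g x) :
    (∫ x in (0:ℝ)..T, f x) ≤ ∫ x in (0:ℝ)..T, g x := by
  by_cases hf : IntervalIntegrable f MeasureTheory.volume 0 T
  · exact intervalIntegral.integral_mono_on hT hf hg hfg
  · rw [intervalIntegral.integral_undef hf]
    exact intervalIntegral.integral_nonneg hT fun x hx => le_trans (h0 x hx) (hfg x hx)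

/-- Quantitative version: if `0 < γ < 1/2`, `ε > 2γ/(1-2γ)`, and `ρ` is nonnegative and bounded
with `ρ_u = o(u^{-ε})`, then there exists `δ ∈ (0,1)` such that
`T^{2γ-2} ∫₀^T ∫₀^T ρ_{|t-s|} ds dt → 0` as `T → ∞`. -/
theorem mixing_double_integral_rate (γ ε : ℝ) (hγ0 : 0 < γ) (hγ : γ < 1 / 2)
    (hε : 2 * γ / (1 - 2 * γ) < ε) (ρ : ℝ → ℝ)
    (hρ_nonneg : ∀ u, 0 ≤ u → 0 ≤ ρ u)
    (hρ_bdd : ∃ M : ℝ, ∀ u, 0 ≤ u → ρ u ≤ M)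
    (hρ_littleo : (fun u : ℝ => ρ u) =o[atTop] fun u : ℝ => u ^ (-ε)) :
    ∃ δ : ℝ, 0 < δ ∧ δ < 1 ∧
      Tendsto (fun T : ℝ =>
          T ^ (2 * γ - 2) * ∫ t in (0:ℝ)..T, ∫ s in (0:ℝ)..T, ρ |t - s|)
        atTop (nhds 0) := by
  obtain ⟨M, hM⟩ := hρ_bdd
  have hM0 : 0 ≤ M := le_trans (hρ_nonneg 0 le_rfl) (hM 0 le_rfl)
  have hγ2 : 0 < 1 - 2 * γ := by linarith
  have hε0 : 0 < ε := lt_trans (div_pos (by linarith) hγ2) hε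
  have hlt : 2 * γ / ε < 1 - 2 * γ := by
    rw [div_lt_iff₀ hε0]
    nlinarith [(div_lt_iff₀ hγ2).mp hε]
  set δ : ℝ := (2 * γ / ε + (1 - 2 * γ)) / 2 with hδdef
  have hδ1 : 2 * γ / ε < δ := by rw [hδdef]; linarith
  have hδ2 : δ < 1 - 2 * γ := by rw [hδdef]; linarith
  have hδ0 : 0 < δ := lt_of_le_of_lt (le_of_lt (div_pos (by linarith) hε0)) hδ1
  have hexp1 : 2 * γ - δ * ε < 0 := by
    have h := (div_lt_iff₀ hε0).mp hδ1
    linarith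
  have hexp2 : 2 * γ + δ - 1 < 0 := by linarith
  refine ⟨δ, hδ0, by linarith, ?_⟩
  -- little-o with constant 1
  have hol := hρ_littleo.def one_pos
  rw [eventually_atTop] at hol
  obtain ⟨u₀, hu₀⟩ := hol
  set u₁ : ℝ := max u₀ 1 with hu₁def
  have hkey : ∀ u : ℝ, u₁ ≤ u → ρ u ≤ u ^ (-ε) := by
    intro u hu
    have h1 : (1:ℝ) ≤ u := le_trans (le_max_right _ _) hu
    have h := hu₀ u (le_trans (le_max_left _ _) hu)
    simp only [Real.norm_eq_abs, one_mul] at h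
    calc ρ u ≤ |ρ u| := le_abs_self _
      _ ≤ |u ^ (-ε)| := h
      _ = u ^ (-ε) := abs_of_nonneg (Real.rpow_nonneg (by linarith) _)
  -- squeeze
  apply squeeze_zero' (g := fun T : ℝ => T ^ (2 * γ - δ * ε) + 2 * M * T ^ (2 * γ + δ - 1))
  · filter_upwards [eventually_ge_atTop (0:ℝ)] with T hT0
    have hFnn : ∀ t ∈ Set.Icc (0:ℝ) T, 0 ≤ ∫ s in (0:ℝ)..T, ρ |t - s| := by
      intro t _
      exact intervalIntegral.integral_nonneg hT0 fun s _ => hρ_nonneg _ (abs_nonneg _)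
    exact mul_nonneg (Real.rpow_nonneg hT0 _)
      (intervalIntegral.integral_nonneg hT0 hFnn)
  · filter_upwards [eventually_ge_atTop (1:ℝ),
      (tendsto_rpow_atTop hδ0).eventually_ge_atTop u₁] with T hT1 hTδ
    have hT0 : (0:ℝ) < T := lt_of_lt_of_le one_pos hT1
    set A : ℝ := T ^ δ with hAdef
    set c : ℝ := T ^ (-(δ * ε)) with hcdef
    have hA0 : 0 < A := Real.rpow_pos_of_pos hT0 _
    have hA1 : (1:ℝ) ≤ A := le_trans (le_max_right _ _) hTδ
    have hc0 : 0 ≤ c := Real.rpow_nonneg hT0.le _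
    have hAc : A ^ (-ε) = c := by
      rw [hAdef, hcdef, ← Real.rpow_mul hT0.le]
      ring_nf
    -- pointwise bound on ρ |t - s|
    have hpt : ∀ t ∈ Set.Icc (0:ℝ) T, ∀ s ∈ Set.Icc (0:ℝ) T,
        ρ |t - s| ≤ c + Set.indicator (Set.Icc (t - A) (t + A)) (fun _ => M) s := by
      intro t _ s _
      by_cases h : |t - s| ≤ A
      · have hmem : s ∈ Set.Icc (t - A) (t + A) := by
          rcases abs_le.mp h with ⟨h1, h2⟩
          constructor <;> linarith
        rw [Set.indicator_of_mem hmem]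
        have := hM _ (abs_nonneg (t - s))
        linarith
      · push_neg at h
        have habs : u₁ ≤ |t - s| := le_trans hTδ h.le
        have h1 : ρ |t - s| ≤ |t - s| ^ (-ε) := hkey _ habs
        have h2 : |t - s| ^ (-ε) ≤ A ^ (-ε) :=
          Real.rpow_le_rpow_of_nonpos hA0 h.le (by linarith)
        have h3 : (0:ℝ) ≤ Set.indicator (Set.Icc (t - A) (t + A)) (fun _ => M) s :=
          Set.indicator_nonneg (fun _ _ => hM0) s
        rw [hAc] at h2
        linarith
    -- inner integral bound
    have hinner : ∀ t ∈ Set.Icc (0:ℝ) T,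
        (∫ s in (0:ℝ)..T, ρ |t - s|) ≤ c * T + M * (2 * A) := by
      intro t ht
      have hindt : MeasureTheory.Integrable
          (Set.indicator (Set.Icc (t - A) (t + A)) (fun _ => M)) :=
        (MeasureTheory.integrable_indicator_iff measurableSet_Icc).mpr
          ((MeasureTheory.integrableOn_const_iff).mpr (Or.inr measure_Icc_lt_top))
      have hgint : IntervalIntegrable
          (fun s => c + Set.indicator (Set.Icc (t - A) (t + A)) (fun _ => M) s)
          MeasureTheory.volume 0 T :=
        (intervalIntegrable_const (c := c)).add hindt.intervalIntegrable
      refine le_trans (aux_integral_le_of_le _ _ T hT0.le hgint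
        (fun s _ => hρ_nonneg _ (abs_nonneg _)) (hpt t ht)) ?_
      rw [intervalIntegral.integral_add (intervalIntegrable_const (c := c)) hindt.intervalIntegrable]
      have h1 : (∫ _ in (0:ℝ)..T, c) = c * T := by
        simp [mul_comm]
      have h2 : (∫ s in (0:ℝ)..T,
          Set.indicator (Set.Icc (t - A) (t + A)) (fun _ => M) s) ≤ M * (2 * A) := by
        rw [intervalIntegral.integral_of_le hT0.le,
          MeasureTheory.setIntegral_indicator measurableSet_Icc,
          MeasureTheory.setIntegral_const]
        have hμ : (MeasureTheory.volume (Set.Ioc (0:ℝ) T ∩ Set.Icc (t - A) (t + A))).toReal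
            ≤ 2 * A := by
          have hmono : MeasureTheory.volume (Set.Ioc (0:ℝ) T ∩ Set.Icc (t - A) (t + A))
              ≤ MeasureTheory.volume (Set.Icc (t - A) (t + A)) :=
            MeasureTheory.measure_mono Set.inter_subset_right
          have hIcc : (MeasureTheory.volume (Set.Icc (t - A) (t + A))).toReal = 2 * A := by
            rw [Real.volume_Icc, ENNReal.toReal_ofReal (by linarith)]
            ring
          calc (MeasureTheory.volume (Set.Ioc (0:ℝ) T ∩ Set.Icc (t - A) (t + A))).toReal
              ≤ (MeasureTheory.volume (Set.Icc (t - A) (t + A))).toReal :=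
                ENNReal.toReal_mono measure_Icc_lt_top.ne hmono
            _ = 2 * A := hIcc
        simp only [smul_eq_mul]
        calc (MeasureTheory.volume (Set.Ioc (0:ℝ) T ∩ Set.Icc (t - A) (t + A))).toReal * M
            ≤ (2 * A) * M := by
              exact mul_le_mul_of_nonneg_right hμ hM0
          _ = M * (2 * A) := by ring
      linarith
    -- outer integral bound
    have hB0 : 0 ≤ c * T + M * (2 * A) := by positivity
    have houter : (∫ t in (0:ℝ)..T, ∫ s in (0:ℝ)..T, ρ |t - s|)
        ≤ (c * T + M * (2 * A)) * T := by
      have := aux_integral_le_of_le (fun t => ∫ s in (0:ℝ)..T, ρ |t - s|)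
        (fun _ => c * T + M * (2 * A)) T hT0.le intervalIntegrable_const
        (fun t _ => intervalIntegral.integral_nonneg hT0.le
          fun s _ => hρ_nonneg _ (abs_nonneg _))
        hinner
      calc (∫ t in (0:ℝ)..T, ∫ s in (0:ℝ)..T, ρ |t - s|)
          ≤ ∫ _ in (0:ℝ)..T, (c * T + M * (2 * A)) := this
        _ = (c * T + M * (2 * A)) * T := by simp [intervalIntegral.integral_const, smul_eq_mul]; ring
    have hρnn : (0:ℝ) ≤ ∫ t in (0:ℝ)..T, ∫ s in (0:ℝ)..T, ρ |t - s| :=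
      intervalIntegral.integral_nonneg hT0.le fun t _ =>
        intervalIntegral.integral_nonneg hT0.le fun s _ => hρ_nonneg _ (abs_nonneg _)
    have hpow0 : (0:ℝ) ≤ T ^ (2 * γ - 2) := Real.rpow_nonneg hT0.le _
    have hne : T ≠ 0 := hT0.ne'
    have e1 : T ^ (2 * γ - 2) * T = T ^ (2 * γ - 1) := by
      rw [← Real.rpow_add_one hne]; ring_nf
    have e2 : T ^ (2 * γ - 1) * T = T ^ (2 * γ) := by
      rw [← Real.rpow_add_one hne]; ring_nf
    have e3 : T ^ (2 * γ) * c = T ^ (2 * γ - δ * ε) := by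
      rw [hcdef, ← Real.rpow_add hT0]; ring_nf
    have e4 : T ^ (2 * γ - 1) * A = T ^ (2 * γ + δ - 1) := by
      rw [hAdef, ← Real.rpow_add hT0]; ring_nf
    have key : T ^ (2 * γ - 2) * ((c * T + M * (2 * A)) * T)
        = T ^ (2 * γ - δ * ε) + 2 * M * T ^ (2 * γ + δ - 1) := by
      calc T ^ (2 * γ - 2) * ((c * T + M * (2 * A)) * T)
          = (T ^ (2 * γ - 2) * T * T) * c + 2 * M * (T ^ (2 * γ - 2) * T * A) := by ring
        _ = T ^ (2 * γ) * c + 2 * M * (T ^ (2 * γ - 1) * A) := by rw [e1, e2]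
        _ = T ^ (2 * γ - δ * ε) + 2 * M * T ^ (2 * γ + δ - 1) := by rw [e3, e4]
    calc T ^ (2 * γ - 2) * ∫ t in (0:ℝ)..T, ∫ s in (0:ℝ)..T, ρ |t - s|
        ≤ T ^ (2 * γ - 2) * ((c * T + M * (2 * A)) * T) :=
          mul_le_mul_of_nonneg_left houter hpow0
      _ = T ^ (2 * γ - δ * ε) + 2 * M * T ^ (2 * γ + δ - 1) := key
  · have h1 : Tendsto (fun T : ℝ => T ^ (2 * γ - δ * ε)) atTop (nhds 0) := by
      have := tendsto_rpow_neg_atTop (y := δ * ε - 2 * γ) (by linarith)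
      convert this using 2 with T
      ring_nf
    have h2 : Tendsto (fun T : ℝ => 2 * M * T ^ (2 * γ + δ - 1)) atTop (nhds 0) := by
      have := tendsto_rpow_neg_atTop (y := 1 - (2 * γ + δ)) (by linarith)
      have h2' : Tendsto (fun T : ℝ => T ^ (2 * γ + δ - 1)) atTop (nhds 0) := by
        convert this using 2 with T
        ring_nf
      simpa using h2'.const_mul (2 * M)
    simpa using h1.add h2
end

section
/- Let h : ℝ≥0 → ℝ≥0^{d×d} be integrable componentwise with Φ_{αβ} = ∫₀^∞ h_{αβ}(s) ds, and let f : ℝ≥0 → ℝ≥0^d be bounded by K_f. If the spectral radius ρ(Φ) < 1, then the componentwise supremum norm of (h^{*n} * f)(t) is bounded by K_f · |Φ^n| (sum of absolute values of entries of the matrix power Φ^n), which tends to 0 as n → ∞. -/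
attribute [local instance] Matrix.linftyOpNormedRing Matrix.linftyOpNormedAlgebra

open MeasureTheory intervalIntegral Filter Matrix

variable {d : ℕ}

lemma entry_abs_le (M : Matrix (Fin d) (Fin d) ℝ) (i j : Fin d) : |M i j| ≤ ‖M‖ := by
  have h1 : ‖M i j‖₊ ≤ ‖M‖₊ := by
    rw [Matrix.linfty_opNNNorm_def]
    calc ‖M i j‖₊ ≤ ∑ k : Fin d, ‖M i k‖₊ :=
          Finset.single_le_sum (f := fun k => ‖M i k‖₊) (fun k _ => zero_le) (Finset.mem_univ j)
    _ ≤ _ := Finset.le_sup (f := fun i => ∑ k : Fin d, ‖M i k‖₊) (Finset.mem_univ i)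
  simpa [Real.norm_eq_abs] using (NNReal.coe_le_coe.mpr h1 : ‖M i j‖ ≤ _)

lemma entry_continuous (i j : Fin d) : Continuous (fun M : Matrix (Fin d) (Fin d) ℝ => M i j) := by
  refine (LipschitzWith.of_dist_le_mul (K := 1) fun M N => ?_).continuous
  simpa [dist_eq_norm, Real.norm_eq_abs] using entry_abs_le (M - N) i j

lemma mul_entry_nonneg {A B : Matrix (Fin d) (Fin d) ℝ} (hA : ∀ i j, 0 ≤ A i j)
    (hB : ∀ i j, 0 ≤ B i j) : ∀ i j, 0 ≤ (A * B) i j := fun i j => by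
  rw [Matrix.mul_apply]
  exact Finset.sum_nonneg fun k _ => mul_nonneg (hA i k) (hB k j)

lemma pow_entry_nonneg {A : Matrix (Fin d) (Fin d) ℝ} (hA : ∀ i j, 0 ≤ A i j) (n : ℕ) :
    ∀ i j, 0 ≤ (A ^ n) i j := by
  induction n with
  | zero => intro i j; simp [Matrix.one_apply]; positivity
  | succ n ih => rw [pow_succ]; exact mul_entry_nonneg ih hA

lemma inv_one_sub_entry_nonneg {c : Matrix (Fin d) (Fin d) ℝ} (hc : ‖c‖ < 1)
    (hc0 : ∀ i j, 0 ≤ c i j) : ∀ i j, 0 ≤ Ring.inverse (1 - c) i j := by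
  haveI : CompleteSpace (Matrix (Fin d) (Fin d) ℝ) := FiniteDimensional.complete ℝ _
  intro i j
  have hs := (hasSum_geom_series_inverse c hc).tendsto_sum_nat
  have := ((entry_continuous i j).continuousAt.tendsto).comp hs
  refine ge_of_tendsto' this fun n => ?_
  simp only [Function.comp]
  rw [Matrix.sum_apply]
  exact Finset.sum_nonneg fun k _ => pow_entry_nonneg hc0 k i j

lemma ringInverse_one_sub_nonneg (Φ : Matrix (Fin d) (Fin d) ℝ)
    (hΦ0 : ∀ i j, 0 ≤ Φ i j)
    (hU : ∀ t : ℝ, 1 ≤ t → IsUnit (t • (1 : Matrix (Fin d) (Fin d) ℝ) - Φ)) :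
    ∀ i j, 0 ≤ Ring.inverse ((1 : Matrix (Fin d) (Fin d) ℝ) - Φ) i j := by
  haveI : CompleteSpace (Matrix (Fin d) (Fin d) ℝ) := FiniteDimensional.complete ℝ _
  set A : ℝ → Matrix (Fin d) (Fin d) ℝ := fun t => t • (1 : Matrix (Fin d) (Fin d) ℝ) - Φ with hA
  set g : ℝ → Matrix (Fin d) (Fin d) ℝ := fun t => Ring.inverse (A t) with hg
  set P : ℝ → Prop := fun t => ∀ i j, 0 ≤ g t i j with hP
  -- base case for large t
  have base : ∀ t : ℝ, max 1 (‖Φ‖ + 1) ≤ t → P t := by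
    intro t ht i j
    have ht1 : (1:ℝ) ≤ t := le_trans (le_max_left _ _) ht
    have ht0 : (0:ℝ) < t := lt_of_lt_of_le one_pos ht1
    have hΦt : ‖Φ‖ < t := by
      have := le_trans (le_max_right _ _) ht
      have h0 : (0:ℝ) ≤ ‖Φ‖ := norm_nonneg _
      linarith
    set c : Matrix (Fin d) (Fin d) ℝ := t⁻¹ • Φ with hc
    have hcn : ‖c‖ < 1 := by
      rw [hc, norm_smul, Real.norm_eq_abs, abs_of_pos (inv_pos.mpr ht0)]
      rw [inv_mul_lt_iff₀ ht0, mul_one]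
      exact hΦt
    have hc0 : ∀ i j, 0 ≤ c i j := fun i j => by
      rw [hc, Matrix.smul_apply]
      exact mul_nonneg (inv_pos.mpr ht0).le (hΦ0 i j)
    -- t • 1 is a unit with inverse t⁻¹ • 1
    have htinv : (t • (1 : Matrix (Fin d) (Fin d) ℝ)) * (t⁻¹ • 1) = 1 := by
      rw [smul_mul_assoc, mul_smul_comm, smul_smul, mul_inv_cancel₀ (ne_of_gt ht0), one_smul,
        one_mul]
    have htinv' : (t⁻¹ • (1 : Matrix (Fin d) (Fin d) ℝ)) * (t • 1) = 1 := by
      rw [smul_mul_assoc, mul_smul_comm, smul_smul, inv_mul_cancel₀ (ne_of_gt ht0), one_smul,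
        one_mul]
    set u : (Matrix (Fin d) (Fin d) ℝ)ˣ := ⟨t • 1, t⁻¹ • 1, htinv, htinv'⟩ with hu
    have hfact : A t = (t • (1 : Matrix (Fin d) (Fin d) ℝ)) * (1 - c) := by
      rw [hA, hc, mul_sub, mul_one, smul_mul_assoc, mul_smul_comm, smul_smul,
        mul_inv_cancel₀ (ne_of_gt ht0), one_smul, one_mul]
    have hcomm : Commute (t • (1 : Matrix (Fin d) (Fin d) ℝ)) (1 - c) :=
      ((Commute.one_left (1 - c)).smul_left t)
    have : g t = Ring.inverse (1 - c) * Ring.inverse (t • (1 : Matrix (Fin d) (Fin d) ℝ)) := by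
      rw [hg]; simp only []
      rw [hfact, Ring.mul_inverse_rev' hcomm]
    rw [this]
    have hinv1 : Ring.inverse (t • (1 : Matrix (Fin d) (Fin d) ℝ)) = t⁻¹ • 1 := by
      have : Ring.inverse (u : Matrix (Fin d) (Fin d) ℝ) = ↑u⁻¹ := Ring.inverse_unit u
      exact this
    rw [hinv1]
    refine mul_entry_nonneg (inv_one_sub_entry_nonneg hcn hc0) (fun i j => ?_) i j
    rw [Matrix.smul_apply]
    exact mul_nonneg (inv_pos.mpr ht0).le (by rw [Matrix.one_apply]; positivity)
  -- downward step
  have step : ∀ m s : ℝ, 1 ≤ s → s ≤ m → (m - s) * ‖g m‖ < 1 → P m → P s := by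
    intro m s hs1 hsm hnorm hPm
    have hm1 : (1:ℝ) ≤ m := le_trans hs1 hsm
    have hums : IsUnit (A m) := hU m hm1
    set c : Matrix (Fin d) (Fin d) ℝ := (m - s) • g m with hc
    have hcn : ‖c‖ < 1 := by
      rw [hc, norm_smul, Real.norm_eq_abs, abs_of_nonneg (by linarith : (0:ℝ) ≤ m - s)]
      exact hnorm
    have hc0 : ∀ i j, 0 ≤ c i j := fun i j => by
      rw [hc, Matrix.smul_apply]
      exact mul_nonneg (by linarith) (hPm i j)
    have hAg : A m * g m = 1 := Ring.mul_inverse_cancel _ hums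
    have hgA : g m * A m = 1 := Ring.inverse_mul_cancel _ hums
    have hfact : A s = A m * (1 - c) := by
      rw [hc, mul_sub, mul_one, mul_smul_comm, hAg, hA]
      simp only []
      rw [sub_smul]
      abel
    have hcomm : Commute (A m) (1 - c) := by
      have h1 : Commute (A m) (g m) := by
        unfold Commute SemiconjBy
        rw [hAg, hgA]
      exact (Commute.one_right (A m)).sub_right (h1.smul_right (m - s))
    intro i j
    have : g s = Ring.inverse (1 - c) * g m := by
      rw [hg]; simp only []
      rw [hfact, Ring.mul_inverse_rev' hcomm]
    rw [this]
    exact mul_entry_nonneg (inv_one_sub_entry_nonneg hcn hc0) hPm i j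
  -- continuity of entries of g on [1, ∞)
  have cont : ∀ t : ℝ, 1 ≤ t → ∀ i j, ContinuousAt (fun s => g s i j) t := by
    intro t ht i j
    have hAc : ContinuousAt A t := by
      apply ContinuousAt.sub
      · exact (continuous_id.smul continuous_const).continuousAt
      · exact continuousAt_const
    have h1 : ContinuousAt Ring.inverse (A t) := by
      have := NormedRing.inverse_continuousAt (hU t ht).unit
      rwa [IsUnit.unit_spec] at this
    exact ((entry_continuous i j).continuousAt).comp (h1.comp hAc)
  -- the infimum argument
  set S : Set ℝ := {t | 1 ≤ t ∧ ∀ s, t ≤ s → P s} with hS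
  have hT0 : max 1 (‖Φ‖ + 1) ∈ S := ⟨le_max_left _ _, fun s hs => base s hs⟩
  have hne : S.Nonempty := ⟨_, hT0⟩
  have hbdd : BddBelow S := ⟨1, fun t ht => ht.1⟩
  set m := sInf S with hm
  have hm1 : 1 ≤ m := le_csInf hne fun t ht => ht.1
  have hPabove : ∀ s, m < s → P s := by
    intro s hs
    obtain ⟨t, htS, hts⟩ := exists_lt_of_csInf_lt hne hs
    exact htS.2 s hts.le
  have hPm : P m := by
    intro i j
    have htd : Tendsto (fun s => g s i j) (nhdsWithin m (Set.Ioi m)) (nhds (g m i j)) :=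
      ((cont m hm1 i j).continuousWithinAt).tendsto
    refine ge_of_tendsto htd ?_
    filter_upwards [self_mem_nhdsWithin] with s hs
    exact hPabove s hs i j
  have hmS : m ∈ S := ⟨hm1, fun s hs => hs.eq_or_lt.elim (fun e => e ▸ hPm) fun h => hPabove s h⟩
  have hm_eq : m = 1 := by
    by_contra hne1
    have h1m : 1 < m := lt_of_le_of_ne hm1 (Ne.symm hne1)
    set ε : ℝ := min (m - 1) (1 / (2 * (‖g m‖ + 1))) with hε
    have hgm0 : (0:ℝ) ≤ ‖g m‖ := norm_nonneg _
    have hεpos : 0 < ε := lt_min (by linarith) (by positivity)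
    have hs0S : m - ε ∈ S := by
      constructor
      · have : ε ≤ m - 1 := min_le_left _ _
        linarith
      · intro s hs
        rcases le_or_gt m s with h | h
        · exact hmS.2 s h
        · refine step m s ?_ h.le ?_ hPm
          · have : ε ≤ m - 1 := min_le_left _ _
            linarith
          · have h1 : m - s ≤ ε := by linarith
            have h2 : ε ≤ 1 / (2 * (‖g m‖ + 1)) := min_le_right _ _
            have h3 : (m - s) * ‖g m‖ ≤ (1 / (2 * (‖g m‖ + 1))) * ‖g m‖ := by
              apply mul_le_mul_of_nonneg_right (le_trans h1 h2) hgm0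
            have h4 : (1 / (2 * (‖g m‖ + 1))) * ‖g m‖ < 1 := by
              rw [div_mul_eq_mul_div, one_mul, div_lt_one (by positivity)]
              linarith
            linarith
    have := csInf_le hbdd hs0S
    rw [← hm] at this
    linarith
  have : P 1 := hm_eq ▸ hPm
  intro i j
  have h11 : A 1 = 1 - Φ := by rw [hA]; simp
  simpa only [hg, h11] using this i j

lemma isUnit_smul_one_sub (Φ : Matrix (Fin d) (Fin d) ℝ) (hρ : spectralRadius ℝ Φ < 1)
    (t : ℝ) (ht : 1 ≤ t) : IsUnit (t • (1 : Matrix (Fin d) (Fin d) ℝ) - Φ) := by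
  by_contra hnu
  have htsp : t ∈ spectrum ℝ Φ := by
    rw [spectrum.mem_iff, Algebra.algebraMap_eq_smul_one]
    exact hnu
  have hle : (‖t‖₊ : ENNReal) ≤ spectralRadius ℝ Φ :=
    le_iSup₂ (f := fun k (_ : k ∈ spectrum ℝ Φ) => (‖k‖₊ : ENNReal)) t htsp
  have h1 : (‖t‖₊ : ENNReal) < 1 := lt_of_le_of_lt hle hρ
  rw [ENNReal.coe_lt_one_iff, ← NNReal.coe_lt_one, coe_nnnorm, Real.norm_eq_abs] at h1
  rw [abs_lt] at h1
  linarith [h1.2]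

lemma tendsto_sum_abs_pow (Φ : Matrix (Fin d) (Fin d) ℝ) (hΦ0 : ∀ i j, 0 ≤ Φ i j)
    (hρ : spectralRadius ℝ Φ < 1) :
    Filter.Tendsto (fun n : ℕ => ∑ α : Fin d, ∑ β : Fin d, |(Φ ^ n) α β|) Filter.atTop
      (nhds 0) := by
  have hU := isUnit_smul_one_sub Φ hρ
  set B : Matrix (Fin d) (Fin d) ℝ := Ring.inverse ((1 : Matrix (Fin d) (Fin d) ℝ) - Φ) with hB
  have hB0 : ∀ i j, 0 ≤ B i j := ringInverse_one_sub_nonneg Φ hΦ0 hU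
  have hu1 : IsUnit ((1 : Matrix (Fin d) (Fin d) ℝ) - Φ) := by
    have := hU 1 le_rfl
    rwa [one_smul] at this
  have hBl : B * ((1 : Matrix (Fin d) (Fin d) ℝ) - Φ) = 1 := Ring.inverse_mul_cancel _ hu1
  have hpartial : ∀ (N : ℕ) (α β : Fin d),
      (∑ n ∈ Finset.range N, (Φ ^ n) α β) ≤ B α β := by
    intro N α β
    have hgeo : ((1 : Matrix (Fin d) (Fin d) ℝ) - Φ) * (∑ n ∈ Finset.range N, Φ ^ n)
        = 1 - Φ ^ N := mul_neg_geom_sum Φ N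
    have hS : (∑ n ∈ Finset.range N, Φ ^ n) = B - B * Φ ^ N := by
      have h1 : (∑ n ∈ Finset.range N, Φ ^ n)
          = B * (((1 : Matrix (Fin d) (Fin d) ℝ) - Φ) * (∑ n ∈ Finset.range N, Φ ^ n)) := by
        rw [← mul_assoc, hBl, one_mul]
      rw [h1, hgeo, mul_sub, mul_one]
    have h2 : (∑ n ∈ Finset.range N, (Φ ^ n) α β) = B α β - (B * Φ ^ N) α β := by
      rw [← Matrix.sum_apply, hS, Matrix.sub_apply]
    rw [h2]
    have := mul_entry_nonneg hB0 (pow_entry_nonneg hΦ0 N) α β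
    linarith
  set F : ℕ → ℝ := fun n => ∑ α : Fin d, ∑ β : Fin d, |(Φ ^ n) α β| with hF
  have hFeq : ∀ n, F n = ∑ α : Fin d, ∑ β : Fin d, (Φ ^ n) α β := by
    intro n
    exact Finset.sum_congr rfl fun α _ => Finset.sum_congr rfl fun β _ =>
      abs_of_nonneg (pow_entry_nonneg hΦ0 n α β)
  have hF0 : ∀ n, 0 ≤ F n := fun n =>
    Finset.sum_nonneg fun α _ => Finset.sum_nonneg fun β _ => abs_nonneg _
  have hFb : ∀ N, ∑ n ∈ Finset.range N, F n ≤ ∑ α : Fin d, ∑ β : Fin d, B α β := by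
    intro N
    have hswap : ∑ n ∈ Finset.range N, F n
        = ∑ α : Fin d, ∑ β : Fin d, ∑ n ∈ Finset.range N, (Φ ^ n) α β := by
      simp only [hFeq]
      rw [Finset.sum_comm]
      exact Finset.sum_congr rfl fun α _ => Finset.sum_comm
    rw [hswap]
    exact Finset.sum_le_sum fun α _ => Finset.sum_le_sum fun β _ => hpartial N α β
  exact (summable_of_sum_range_le hF0 hFb).tendsto_atTop_zero


/-- Matrix-kernel convolution acting on vector-valued functions:
`(h * f)_i(t) = Σ_k ∫₀^t h_{ik}(t-s) f_k(s) ds`. -/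
noncomputable def matConv {d : ℕ} (h : ℝ → Matrix (Fin d) (Fin d) ℝ)
    (f : ℝ → Fin d → ℝ) : ℝ → Fin d → ℝ :=
  fun t i => ∑ k : Fin d, ∫ s in (0:ℝ)..t, h (t - s) i k * f s k

/-- If `h` is a componentwise-integrable nonnegative matrix kernel with
`Φ_{αβ} = ∫₀^∞ h_{αβ}`, `f` is nonnegative and bounded by `K_f`, and `ρ(Φ) < 1`, then
each component of `(h^{*n} * f)(t)` is bounded by `K_f · |Φ^n|` (sum of absolute values of the
entries of `Φ^n`), which tends to `0` as `n → ∞`. -/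
theorem matConv_iterate_bound {d : ℕ} [NeZero d]
    (h : ℝ → Matrix (Fin d) (Fin d) ℝ)
    (hh_nonneg : ∀ t i k, 0 ≤ t → 0 ≤ h t i k)
    (hh_int : ∀ i k, IntegrableOn (fun t => h t i k) (Set.Ici 0) volume)
    (Φ : Matrix (Fin d) (Fin d) ℝ)
    (hΦ : ∀ i k, Φ i k = ∫ t in Set.Ioi (0:ℝ), h t i k)
    (hρ : spectralRadius ℝ Φ < 1)
    (f : ℝ → Fin d → ℝ) (hf_meas : Measurable (Function.uncurry f))
    (hf_nonneg : ∀ t i, 0 ≤ t → 0 ≤ f t i)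
    (K_f : ℝ) (hK : ∀ t i, 0 ≤ t → f t i ≤ K_f) :
    (∀ n : ℕ, ∀ t i, 0 ≤ t →
        (matConv h)^[n] f t i ≤ K_f * ∑ α : Fin d, ∑ β : Fin d, |(Φ ^ n) α β|) ∧
      Tendsto (fun n : ℕ => ∑ α : Fin d, ∑ β : Fin d, |(Φ ^ n) α β|) atTop (nhds 0) := by
  have hΦ0 : ∀ i j, 0 ≤ Φ i j := fun i j => by
    rw [hΦ]
    exact setIntegral_nonneg measurableSet_Ioi fun s hs => hh_nonneg s i j (le_of_lt hs)
  have i₀ : Fin d := ⟨0, Nat.pos_of_ne_zero (NeZero.ne d)⟩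
  have hK0 : 0 ≤ K_f := le_trans (hf_nonneg 0 i₀ le_rfl) (hK 0 i₀ le_rfl)
  have key : ∀ n : ℕ, ∀ t : ℝ, 0 ≤ t → ∀ i : Fin d,
      0 ≤ (matConv h)^[n] f t i ∧
        (matConv h)^[n] f t i ≤ K_f * ∑ β : Fin d, (Φ ^ n) i β := by
    intro n
    induction n with
    | zero =>
      intro t ht i
      have h1 : ∑ β : Fin d, ((Φ : Matrix (Fin d) (Fin d) ℝ) ^ 0) i β = 1 := by
        simp [Matrix.one_apply]
      simp only [Function.iterate_zero, id_eq]
      exact ⟨hf_nonneg t i ht, by rw [h1, mul_one]; exact hK t i ht⟩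
    | succ n ih =>
      intro t ht i
      rw [Function.iterate_succ_apply']
      set gn : ℝ → Fin d → ℝ := (matConv h)^[n] f with hgn
      have hconv : matConv h gn t i = ∑ k : Fin d, ∫ s in (0:ℝ)..t, h (t - s) i k * gn s k :=
        rfl
      constructor
      · rw [hconv]
        refine Finset.sum_nonneg fun k _ => ?_
        refine intervalIntegral.integral_nonneg ht fun s hs => ?_
        exact mul_nonneg (hh_nonneg _ i k (by linarith [hs.2])) ((ih s hs.1 k).1)
      · rw [hconv]
        have hterm : ∀ k : Fin d,
            (∫ s in (0:ℝ)..t, h (t - s) i k * gn s k)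
              ≤ Φ i k * (K_f * ∑ β : Fin d, (Φ ^ n) k β) := by
          intro k
          set C : ℝ := K_f * ∑ β : Fin d, (Φ ^ n) k β with hC
          have hC0 : 0 ≤ C :=
            mul_nonneg hK0 (Finset.sum_nonneg fun β _ => pow_entry_nonneg hΦ0 n k β)
          have hH1 : IntervalIntegrable (fun u => h u i k) volume 0 t := by
            rw [intervalIntegrable_iff_integrableOn_Ioc_of_le ht]
            exact (hh_int i k).mono_set (Set.Ioc_subset_Ioi_self.trans Set.Ioi_subset_Ici_self)
          have hH2 : IntervalIntegrable (fun s => h (t - s) i k) volume 0 t := by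
            have := (hH1.comp_sub_left t).symm
            simpa using this
          have hRHS : IntervalIntegrable (fun s => h (t - s) i k * C) volume 0 t :=
            hH2.mul_const C
          have hub : (∫ s in (0:ℝ)..t, h (t - s) i k * C) ≤ Φ i k * C := by
            rw [intervalIntegral.integral_mul_const]
            have hsub : (∫ s in (0:ℝ)..t, h (t - s) i k) = ∫ u in (0:ℝ)..t, h u i k := by
              have := intervalIntegral.integral_comp_sub_left (a := 0) (b := t)
                (fun u => h u i k) t
              simpa using this
            rw [hsub]
            have hmono : (∫ u in (0:ℝ)..t, h u i k) ≤ Φ i k := by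
              rw [intervalIntegral.integral_of_le ht, hΦ]
              refine setIntegral_mono_set
                ((hh_int i k).mono_set Set.Ioi_subset_Ici_self) ?_ ?_
              · exact (ae_restrict_iff' measurableSet_Ioi).mpr
                  (ae_of_all _ fun s hs => hh_nonneg s i k (le_of_lt hs))
              · exact HasSubset.Subset.eventuallyLE Set.Ioc_subset_Ioi_self
            exact mul_le_mul_of_nonneg_right hmono hC0
          by_cases hint : IntervalIntegrable (fun s => h (t - s) i k * gn s k) volume 0 t
          · refine le_trans ?_ hub
            refine intervalIntegral.integral_mono_on ht hint hRHS fun s hs => ?_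
            exact mul_le_mul_of_nonneg_left ((ih s hs.1 k).2)
              (hh_nonneg _ i k (by linarith [hs.2]))
          · rw [intervalIntegral.integral_undef hint]
            exact mul_nonneg (hΦ0 i k) hC0
        refine le_trans (Finset.sum_le_sum fun k _ => hterm k) ?_
        have hid : ∑ k : Fin d, Φ i k * (K_f * ∑ β : Fin d, (Φ ^ n) k β)
            = K_f * ∑ β : Fin d, (Φ ^ (n + 1)) i β := by
          simp only [pow_succ', Matrix.mul_apply, Finset.mul_sum]
          rw [Finset.sum_comm]
          exact Finset.sum_congr rfl fun k _ => Finset.sum_congr rfl fun β _ => by ring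
        rw [hid]
  constructor
  · intro n t i ht
    refine le_trans (key n t ht i).2 ?_
    have hle : ∑ β : Fin d, (Φ ^ n) i β ≤ ∑ α : Fin d, ∑ β : Fin d, |(Φ ^ n) α β| := by
      have h1 : ∑ β : Fin d, (Φ ^ n) i β = ∑ β : Fin d, |(Φ ^ n) i β| :=
        Finset.sum_congr rfl fun β _ => (abs_of_nonneg (pow_entry_nonneg hΦ0 n i β)).symm
      rw [h1]
      exact Finset.single_le_sum (f := fun α => ∑ β : Fin d, |(Φ ^ n) α β|)
        (fun α _ => Finset.sum_nonneg fun β _ => abs_nonneg _) (Finset.mem_univ i)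
    exact mul_le_mul_of_nonneg_left hle hK0
  · exact tendsto_sum_abs_pow Φ hΦ0 hρ
end
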